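/- Let c be a standard Coxeter element of S_{n+1}, x ∈ NC(S_{n+1}, c), m_x^c a standard form of x, and w_x^c the word extracted from m_x^c. For i ∈ {1,…,n}, let x_i^c be the number of occurrences of the letter s_i in m_x^c and let n_i be the number of occurrences of s_i in w_x^c. Then: (1) if s_i is a center of m_x^c, then 2·n_i − 1 = x_i^c; (2) if s_i is not a center of m_x^c, then 2·n_i = x_i^c. -/

import Mathlib

namespace NCTL

/-- 0-indexed simple reflection: letter `i` (with `0 ≤ i < n`) stands for the simple
transposition `s_{i+1}` of the paper, i.e. the swap of the 0-indexed points `i` and `i+1`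
of `Fin (n+1)` (which represent the points `i+1` and `i+2` of `{1,…,n+1}`). -/
def simpleRefl (n : ℕ) (i : ℕ) : Equiv.Perm (Fin (n + 1)) :=
  if h : i < n then Equiv.swap ⟨i, by omega⟩ ⟨i + 1, by omega⟩ else 1

/-- The permutation represented by a word in the letters. -/
def wordProd (n : ℕ) (l : List ℕ) : Equiv.Perm (Fin (n + 1)) :=
  (l.map (simpleRefl n)).prod

/-- A valid word in the letters `0,…,n-1`. -/
def IsWord (n : ℕ) (l : List ℕ) : Prop := ∀ a ∈ l, a < n

/-- A standard Coxeter element: a product of all the simple reflections, each occurring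
exactly once, in some order. -/
def IsStdCox (n : ℕ) (c : Equiv.Perm (Fin (n + 1))) : Prop :=
  ∃ l : List ℕ, l.Perm (List.range n) ∧ wordProd n l = c

def IsTransposition {α : Type*} [DecidableEq α] (σ : Equiv.Perm α) : Prop :=
  ∃ a b, a ≠ b ∧ σ = Equiv.swap a b

/-- Reflection length: the minimal number of transpositions needed to write `w`. -/
noncomputable def reflLength (n : ℕ) (w : Equiv.Perm (Fin (n + 1))) : ℕ :=
  sInf {k | ∃ l : List (Equiv.Perm (Fin (n + 1))),
    l.length = k ∧ (∀ t ∈ l, IsTransposition t) ∧ l.prod = w}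

/-- The absolute order `u ≤_T v`. -/
def absLe (n : ℕ) (u v : Equiv.Perm (Fin (n + 1))) : Prop :=
  reflLength n u + reflLength n (u⁻¹ * v) = reflLength n v

/-- The set of noncrossing partitions `NC(S_{n+1}, c)`. -/
def NC (n : ℕ) (c : Equiv.Perm (Fin (n + 1))) : Set (Equiv.Perm (Fin (n + 1))) :=
  {x | absLe n x c}

/-- A block of `x`: an orbit of `x` of cardinality at least 2 (recorded as a `Finset`). -/
def IsBlock (n : ℕ) (x : Equiv.Perm (Fin (n + 1))) (B : Finset (Fin (n + 1))) : Prop :=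
  ∃ a, x a ≠ a ∧ ∀ b, b ∈ B ↔ x.SameCycle a b

/-- `k` is the minimum of some block of `x`. -/
def IsBlockMin (n : ℕ) (x : Equiv.Perm (Fin (n + 1))) (k : Fin (n + 1)) : Prop :=
  ∃ B, IsBlock n x B ∧ k ∈ B ∧ ∀ j ∈ B, k ≤ j

/-- `k` is the maximum of some block of `x`. -/
def IsBlockMax (n : ℕ) (x : Equiv.Perm (Fin (n + 1))) (k : Fin (n + 1)) : Prop :=
  ∃ B, IsBlock n x B ∧ k ∈ B ∧ ∀ j ∈ B, j ≤ k

/-- `k` is nested in the block `B`: `k ∉ B` and `min B < k < max B`. -/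
def Nested (n : ℕ) (k : Fin (n + 1)) (B : Finset (Fin (n + 1))) : Prop :=
  k ∉ B ∧ (∃ a ∈ B, a < k) ∧ ∃ b ∈ B, k < b

open Classical in
/-- `D_x` : the support of `x` minus the set of minima of blocks of `x`. -/
noncomputable def Dset (n : ℕ) (x : Equiv.Perm (Fin (n + 1))) : Finset (Fin (n + 1)) :=
  x.support.filter fun k => ¬ IsBlockMin n x k

open Classical in
/-- `U_x` : the support of `x` minus the set of maxima of blocks of `x`. -/
noncomputable def Uset (n : ℕ) (x : Equiv.Perm (Fin (n + 1))) : Finset (Fin (n + 1)) :=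
  x.support.filter fun k => ¬ IsBlockMax n x k

/-- The set `I(n)` of pairs `(D, U)` with `|D| = |U|` and `d_i < u_i` for all `i`
(in the increasing enumerations). -/
def Iset (n : ℕ) : Set (Finset (Fin (n + 1)) × Finset (Fin (n + 1))) :=
  {p | ∃ h : p.1.card = p.2.card, ∀ i : Fin p.1.card,
    p.1.orderEmbOfFin rfl i < p.2.orderEmbOfFin h.symm i}

/-- `R_c = {c^m(1) : 0 ≤ m ≤ k₀}` where `k₀ ≥ 1` is minimal with `c^{k₀}(1) = n+1`
(0-indexed: `1 ↦ 0` and `n+1 ↦ Fin.last n`). -/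
def Rset (n : ℕ) (c : Equiv.Perm (Fin (n + 1))) : Set (Fin (n + 1)) :=
  {j | ∃ m : ℕ, (c ^ m) (0 : Fin (n + 1)) = j ∧
    ∀ m', 0 < m' → m' < m → (c ^ m') (0 : Fin (n + 1)) ≠ Fin.last n}

/-- `L_c = {1, n+1} ∪ ({1,…,n+1} \ R_c)` (0-indexed). -/
def Lset (n : ℕ) (c : Equiv.Perm (Fin (n + 1))) : Set (Fin (n + 1)) :=
  {0, Fin.last n} ∪ (Rset n c)ᶜ

open Classical in
/-- `M_x^c = D_x ∩ U_x ∩ L_c`. -/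
noncomputable def Mset (n : ℕ) (c x : Equiv.Perm (Fin (n + 1))) : Finset (Fin (n + 1)) :=
  (Dset n x ∩ Uset n x).filter fun k => k ∈ Lset n c

open Classical in
/-- `N_x^c` : indices in `L_c`, not in `supp(x)`, nested in at least one block of `x`. -/
noncomputable def Nnest (n : ℕ) (c x : Equiv.Perm (Fin (n + 1))) : Finset (Fin (n + 1)) :=
  Finset.univ.filter fun k =>
    k ∈ Lset n c ∧ k ∉ x.support ∧ ∃ B, IsBlock n x B ∧ Nested n k B

/-- `l` is a reduced expression of `w`. -/
def IsReduced (n : ℕ) (w : Equiv.Perm (Fin (n + 1))) (l : List ℕ) : Prop :=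
  IsWord n l ∧ wordProd n l = w ∧
    ∀ l', IsWord n l' → wordProd n l' = w → l.length ≤ l'.length

/-- A single commutation move `s_a s_b ↦ s_b s_a` (with `|a - b| ≥ 2`) on words. -/
def CommMove (l l' : List ℕ) : Prop :=
  ∃ (u v : List ℕ) (a b : ℕ), (a + 2 ≤ b ∨ b + 2 ≤ a) ∧
    l = u ++ a :: b :: v ∧ l' = u ++ b :: a :: v

/-- Fully commutative: any two reduced expressions are related by commutation moves. -/
def IsFC (n : ℕ) (w : Equiv.Perm (Fin (n + 1))) : Prop :=
  ∀ l l', IsReduced n w l → IsReduced n w l' → Relation.ReflTransGen CommMove l l'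

/-- `run i j = [i, i-1, …, j]` (for `j ≤ i`). -/
def run (i j : ℕ) : List ℕ := (List.range (i + 1 - j)).map fun t => i - t

/-- The word `(s_{i_1} ⋯ s_{j_1}) ⋯ (s_{i_k} ⋯ s_{j_k})` of normal-form shape. -/
def normalWord (k : ℕ) (i j : Fin k → ℕ) : List ℕ :=
  (List.ofFn fun m : Fin k => run (i m) (j m)).flatten

/-- The data `(k, i, j)` is the normal form of `w`. -/
def IsNormalFormOf (n : ℕ) (w : Equiv.Perm (Fin (n + 1))) (k : ℕ) (i j : Fin k → ℕ) : Prop :=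
  (∀ m, i m < n) ∧ (∀ m, j m ≤ i m) ∧ StrictMono i ∧ StrictMono j ∧
    IsReduced n w (normalWord k i j)

/-- A word of normal-form shape. -/
def NormalShape (n : ℕ) (l : List ℕ) : Prop :=
  ∃ (k : ℕ) (i j : Fin k → ℕ), (∀ m, i m < n) ∧ (∀ m, j m ≤ i m) ∧
    StrictMono i ∧ StrictMono j ∧ l = normalWord k i j

/-- `a ∈ I_w` (letters 0-indexed). -/
def memIset (n : ℕ) (w : Equiv.Perm (Fin (n + 1))) (a : ℕ) : Prop :=
  ∃ (k : ℕ) (i j : Fin k → ℕ), IsNormalFormOf n w k i j ∧ ∃ m, i m = a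

/-- `a ∈ J_w` (letters 0-indexed). -/
def memJset (n : ℕ) (w : Equiv.Perm (Fin (n + 1))) (a : ℕ) : Prop :=
  ∃ (k : ℕ) (i j : Fin k → ℕ), IsNormalFormOf n w k i j ∧ ∃ m, j m = a

/-- The characterizing property of the bijection `φ : NC(S_{n+1},c) → FC(S_{n+1})`. -/
def PhiCharOn (n : ℕ) (c : Equiv.Perm (Fin (n + 1)))
    (φ : Equiv.Perm (Fin (n + 1)) → Equiv.Perm (Fin (n + 1))) : Prop :=
  Set.BijOn φ (NC n c) {w | IsFC n w} ∧
  ∀ x ∈ NC n c, ∀ k : Fin (n + 1),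
    (memJset n (φ x) (k : ℕ) ↔
      (k ∈ Rset n c ∧ k ∈ Dset n x) ∨ (k ∈ Lset n c ∧ IsBlockMin n x k) ∨
      (k ∈ Lset n c ∧ k ∉ x.support ∧ ∃ B, IsBlock n x B ∧ Nested n k B)) ∧
    ((∃ a : ℕ, a + 1 = (k : ℕ) ∧ memIset n (φ x) a) ↔
      (k ∈ Rset n c ∧ k ∈ Uset n x) ∨ (k ∈ Lset n c ∧ IsBlockMax n x k) ∨
      (k ∈ Lset n c ∧ k ∉ x.support ∧ ∃ B, IsBlock n x B ∧ Nested n k B))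

/-- `(a,b)` is a bump of the block `B`. -/
def IsBump (n : ℕ) (a b : Fin (n + 1)) (B : Finset (Fin (n + 1))) : Prop :=
  a < b ∧ a ∈ B ∧ b ∈ B ∧ ∀ j ∈ B, ¬ (a < j ∧ j < b)

/-- `L` is a distinguished expression of the block `B` of `x`: it lists the bumps of `B`,
each exactly once, and its product (as transpositions) is the cycle of `x` on `B`. -/
def IsDistinguished (n : ℕ) (x : Equiv.Perm (Fin (n + 1))) (B : Finset (Fin (n + 1)))
    (L : List (Fin (n + 1) × Fin (n + 1))) : Prop :=
  L.Nodup ∧ (∀ p, p ∈ L ↔ IsBump n p.1 p.2 B) ∧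
    ∀ j, ((L.map fun p => Equiv.swap p.1 p.2).prod) j = if j ∈ B then x j else j

/-- The key ordering the blocks: the minimal `m ≥ 1` with `c^{-m}(n+1) = min B`. -/
noncomputable def blockKey (n : ℕ) (c : Equiv.Perm (Fin (n + 1)))
    (B : Finset (Fin (n + 1))) : ℕ :=
  sInf {m | 1 ≤ m ∧ ∃ b ∈ B, (∀ j ∈ B, b ≤ j) ∧ (c⁻¹ ^ m) (Fin.last n) = b}

/-- `L` encodes a standard form `m_x^c` of `x`: the list (in order) of the bumps whose
syllables, concatenated, give the standard form; the blocks are taken in increasing order,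
and a distinguished expression is used inside each block. -/
def IsStdFormData (n : ℕ) (c x : Equiv.Perm (Fin (n + 1)))
    (L : List (Fin (n + 1) × Fin (n + 1))) : Prop :=
  ∃ (Bs : List (Finset (Fin (n + 1)))) (Ls : List (List (Fin (n + 1) × Fin (n + 1)))),
    Bs.Nodup ∧ (∀ B, B ∈ Bs ↔ IsBlock n x B) ∧
    Bs.Chain' (fun B B' => blockKey n c B < blockKey n c B') ∧
    List.Forall₂ (IsDistinguished n x) Bs Ls ∧
    L = Ls.flatten

/-- The syllable of the transposition `(a, b)` (0-indexed points, `a < b`):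
the word `s_{b-1} ⋯ s_{a+1} s_a s_{a+1} ⋯ s_{b-1}` in 0-indexed letters. -/
def syllable (a b : ℕ) : List ℕ := run (b - 1) a ++ (run (b - 1) (a + 1)).reverse

/-- The word of the standard form encoded by `L` (concatenation of the syllables). -/
def stdWord (n : ℕ) (L : List (Fin (n + 1) × Fin (n + 1))) : List ℕ :=
  (L.map fun p => syllable (p.1 : ℕ) (p.2 : ℕ)).flatten

/-- The letter `t` is a center of (a syllable of) the standard form encoded by `L`. -/
def IsCenterOf (n : ℕ) (L : List (Fin (n + 1) × Fin (n + 1))) (t : ℕ) : Prop :=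
  ∃ p ∈ L, (p.1 : ℕ) = t

/-- The letter `t` occurs in the syllable of the bump `p`. -/
def occursIn (n : ℕ) (p : Fin (n + 1) × Fin (n + 1)) (t : ℕ) : Prop :=
  (p.1 : ℕ) ≤ t ∧ t < (p.2 : ℕ)

/-- The selection rule for the extracted word `w_x^c`: the letter `t` is taken from the
right part of the syllables in which it occurs twice. -/
def selRight (n : ℕ) (c : Equiv.Perm (Fin (n + 1)))
    (L : List (Fin (n + 1) × Fin (n + 1))) (t : ℕ) : Prop :=
  (IsCenterOf n L t ∧ ∃ h : t < n + 1, (⟨t, h⟩ : Fin (n + 1)) ∈ Rset n c) ∨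
  (¬ IsCenterOf n L t ∧ ∃ h : t < n + 1, (⟨t, h⟩ : Fin (n + 1)) ∈ Lset n c)

open Classical in
/-- The subword extracted from a single syllable: the center is kept, and any letter
occurring twice is kept from the left or right part according to `sel`. -/
noncomputable def extractSyllable (sel : ℕ → Prop) (a b : ℕ) : List ℕ :=
  (run (b - 1) a).filter (fun t => decide (t = a ∨ ¬ sel t)) ++
  ((run (b - 1) (a + 1)).reverse).filter fun t => decide (sel t)

/-- The extracted word `w_x^c`. -/
noncomputable def extractWord (n : ℕ) (c : Equiv.Perm (Fin (n + 1)))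
    (L : List (Fin (n + 1) × Fin (n + 1))) : List ℕ :=
  (L.map fun p => extractSyllable (selRight n c L) (p.1 : ℕ) (p.2 : ℕ)).flatten

/-!
The syllable of a bump `(α, β)` contains its center `s_α` once and every `s_i` with
`α < i < β` twice, and the extraction keeps exactly one copy of each of these letters. Hence
`2·n_i = x_i^c + C_i`, where `C_i` is the number of syllables centered at `s_i`. A bump is
determined by its left end point, since the blocks of `x` are disjoint and inside a block the
bump starting at `α` ends at the next element; as the standard form lists each bump once,
`C_i` is `1` or `0` according as `s_i` is a center or not.
-/

theorem run_eq_reverse_range' (i j : ℕ) : run i j = (List.range' j (i + 1 - j)).reverse := by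
  rw [List.reverse_range', run]
  refine List.map_congr_left fun t ht => ?_
  rw [List.mem_range] at ht
  omega

theorem count_run (i j a : ℕ) : (run i j).count a = if j ≤ a ∧ a ≤ i then 1 else 0 := by
  rw [run_eq_reverse_range', List.count_reverse, (List.nodup_range' 1).count]
  exact if_congr (List.mem_range'_1.trans (by omega)) rfl rfl

theorem count_filter_eq_ite {α : Type*} [BEq α] [LawfulBEq α] (p : α → Bool) (l : List α)
    (a : α) : (l.filter p).count a = if p a then l.count a else 0 := by
  split_ifs with h
  · exact List.count_filter h
  · exact List.count_eq_zero.2 fun hm => h (List.mem_filter.1 hm).2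

theorem two_mul_count_extractSyllable (sel : ℕ → Prop) {α β : ℕ} (h : α < β) (a : ℕ) :
    2 * (extractSyllable sel α β).count a =
      (syllable α β).count a + if α = a then 1 else 0 := by
  classical
  simp only [extractSyllable, syllable, List.count_append, count_filter_eq_ite,
    List.count_reverse, count_run]
  by_cases hsel : sel a <;> simp only [hsel, not_true_eq_false, not_false_eq_true,
    or_false, or_true, decide_eq_true_eq, decide_false, Bool.false_eq_true, if_true, if_false] <;>
    split_ifs <;> omega

theorem two_mul_count_flatten_extractSyllable {n : ℕ} (sel : ℕ → Prop)
    {L : List (Fin (n + 1) × Fin (n + 1))} (hL : ∀ p ∈ L, (p.1 : ℕ) < p.2) (a : ℕ) :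
    2 * ((L.map fun p => extractSyllable sel p.1 p.2).flatten).count a =
      (stdWord n L).count a + L.countP (fun p => (p.1 : ℕ) = a) := by
  induction L with
  | nil => simp [stdWord]
  | cons p L ih =>
    have hp := two_mul_count_extractSyllable sel (hL p List.mem_cons_self) a
    have hL' := ih fun q hq => hL q (List.mem_cons_of_mem p hq)
    simp only [stdWord, List.map_cons, List.flatten_cons, List.count_append,
      List.countP_cons, decide_eq_true_eq] at hL' ⊢
    split_ifs at hp ⊢ <;> omega

theorem IsBlock.eq_of_mem {n : ℕ} {x : Equiv.Perm (Fin (n + 1))} {B B' : Finset (Fin (n + 1))}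
    (hB : IsBlock n x B) (hB' : IsBlock n x B') {a : Fin (n + 1)} (ha : a ∈ B) (ha' : a ∈ B') :
    B = B' := by
  obtain ⟨b, -, hb⟩ := hB
  obtain ⟨b', -, hb'⟩ := hB'
  have hbb' : x.SameCycle b b' := ((hb a).1 ha).trans ((hb' a).1 ha').symm
  ext y
  rw [hb, hb']
  exact ⟨hbb'.symm.trans, hbb'.trans⟩

theorem IsBump.snd_eq {n : ℕ} {a b b' : Fin (n + 1)} {B : Finset (Fin (n + 1))}
    (h : IsBump n a b B) (h' : IsBump n a b' B) : b = b' := by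
  by_contra hne
  rcases lt_or_gt_of_ne hne with hlt | hlt
  · exact h'.2.2.2 b h.2.2.1 ⟨h.1, hlt⟩
  · exact h.2.2.2 b' h'.2.2.1 ⟨h'.1, hlt⟩

theorem _root_.List.Forall₂.exists_of_mem_right {α β : Type*} {R : α → β → Prop}
    {as : List α} {bs : List β} (h : List.Forall₂ R as bs) {b : β} (hb : b ∈ bs) :
    ∃ a, R a b := by
  rw [← List.map_snd_zip h.length_eq.ge] at hb
  obtain ⟨⟨a, b⟩, hab, rfl⟩ := List.mem_map.1 hb
  exact ⟨a, List.forall₂_zip h hab⟩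

theorem _root_.List.Forall₂.pairwise_right {α β : Type*} {R : α → β → Prop}
    {P : α → α → Prop} {Q : β → β → Prop} {as : List α} {bs : List β}
    (h : List.Forall₂ R as bs) (hP : as.Pairwise P)
    (hPQ : ∀ {a a' b b'}, R a b → R a' b' → P a a' → Q b b') : bs.Pairwise Q := by
  rw [← List.map_fst_zip h.length_eq.le] at hP
  rw [← List.map_snd_zip h.length_eq.ge]
  rw [List.pairwise_map] at hP ⊢
  exact hP.imp_of_mem fun hx hy => hPQ (List.forall₂_zip h hx) (List.forall₂_zip h hy)

section StdForm

variable {n : ℕ} {c x : Equiv.Perm (Fin (n + 1))} {L : List (Fin (n + 1) × Fin (n + 1))}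

theorem IsStdFormData.exists_isBump (hL : IsStdFormData n c x L) {p : Fin (n + 1) × Fin (n + 1)}
    (hp : p ∈ L) : ∃ B, IsBlock n x B ∧ IsBump n p.1 p.2 B := by
  obtain ⟨Bs, Ls, -, hBs, -, hLs, rfl⟩ := hL
  obtain ⟨l, hl, hpl⟩ := List.mem_flatten.1 hp
  have hLs' := (List.forall₂_and_left _ _).2 ⟨fun B hB => (hBs B).1 hB, hLs⟩
  obtain ⟨B, hB⟩ := hLs'.exists_of_mem_right hl
  exact ⟨B, hB.1, (hB.2.2.1 p).1 hpl⟩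

theorem IsStdFormData.fst_lt_snd (hL : IsStdFormData n c x L)
    {p : Fin (n + 1) × Fin (n + 1)} (hp : p ∈ L) : (p.1 : ℕ) < p.2 :=
  let ⟨_, _, hpB⟩ := hL.exists_isBump hp
  hpB.1

theorem IsStdFormData.nodup (hL : IsStdFormData n c x L) : L.Nodup := by
  obtain ⟨Bs, Ls, hBnd, hBs, -, hLs, rfl⟩ := hL
  have hLs' := (List.forall₂_and_left _ _).2 ⟨fun B hB => (hBs B).1 hB, hLs⟩
  refine List.nodup_flatten.2 ⟨fun l hl => ?_, hLs'.pairwise_right hBnd ?_⟩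
  · obtain ⟨B, -, hB⟩ := hLs'.exists_of_mem_right hl
    exact hB.1
  · rintro B B' l l' ⟨hB, hBl⟩ ⟨hB', hBl'⟩ hne p hp hp'
    exact hne (hB.eq_of_mem hB' ((hBl.2.1 p).1 hp).2.1 ((hBl'.2.1 p).1 hp').2.1)

theorem IsStdFormData.eq_of_fst_eq (hL : IsStdFormData n c x L)
    {p q : Fin (n + 1) × Fin (n + 1)} (hp : p ∈ L) (hq : q ∈ L) (h : p.1 = q.1) : p = q := by
  obtain ⟨B, hB, hpB⟩ := hL.exists_isBump hp
  obtain ⟨B', hB', hqB'⟩ := hL.exists_isBump hq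
  rw [← hB.eq_of_mem hB' hpB.2.1 (h ▸ hqB'.2.1), ← h] at hqB'
  exact Prod.ext h (hpB.snd_eq hqB')

theorem IsStdFormData.countP_fst_eq_one (hL : IsStdFormData n c x L) {a : ℕ}
    (hcen : IsCenterOf n L a) : L.countP (fun p => (p.1 : ℕ) = a) = 1 := by
  obtain ⟨p, hp, rfl⟩ := hcen
  refine Eq.trans ?_ (List.count_eq_one_of_mem hL.nodup hp)
  rw [List.count_eq_countP]
  refine List.countP_congr fun q hq => ?_
  simp only [decide_eq_true_eq, beq_iff_eq]
  exact ⟨fun h => hL.eq_of_fst_eq hq hp (Fin.val_injective h), fun h => h ▸ rfl⟩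

theorem countP_fst_eq_zero_of_not_isCenterOf {a : ℕ} (hcen : ¬ IsCenterOf n L a) :
    L.countP (fun p => (p.1 : ℕ) = a) = 0 :=
  List.countP_eq_zero.2 fun p hp hpa => hcen ⟨p, hp, of_decide_eq_true hpa⟩

end StdForm

theorem statement_16_general (n : ℕ) (c : Equiv.Perm (Fin (n + 1)))
    (x : Equiv.Perm (Fin (n + 1)))
    (L : List (Fin (n + 1) × Fin (n + 1))) (hL : IsStdFormData n c x L)
    (a : ℕ) :
    (IsCenterOf n L a →
      2 * (extractWord n c L).count a - 1 = (stdWord n L).count a) ∧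
    (¬ IsCenterOf n L a →
      2 * (extractWord n c L).count a = (stdWord n L).count a) := by
  have hcount : 2 * (extractWord n c L).count a =
      (stdWord n L).count a + L.countP (fun p => (p.1 : ℕ) = a) :=
    two_mul_count_flatten_extractSyllable _ (fun _ => hL.fst_lt_snd) a
  refine ⟨fun hcen => ?_, fun hcen => ?_⟩
  · rw [hL.countP_fst_eq_one hcen] at hcount
    omega
  · rw [countP_fst_eq_zero_of_not_isCenterOf hcen] at hcount
    omega

/-- counts of a letter in the standard form `m_x^c` versus the extracted
word `w_x^c`: `2·n_i − 1 = x_i^c` if `s_i` is a center of `m_x^c`, and `2·n_i = x_i^c`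
otherwise. -/
theorem statement_16 (n : ℕ) (hn : 1 ≤ n) (c : Equiv.Perm (Fin (n + 1)))
    (hc : IsStdCox n c) (x : Equiv.Perm (Fin (n + 1))) (hx : x ∈ NC n c)
    (L : List (Fin (n + 1) × Fin (n + 1))) (hL : IsStdFormData n c x L)
    (a : ℕ) (ha : a < n) :
    (IsCenterOf n L a →
      2 * (extractWord n c L).count a - 1 = (stdWord n L).count a) ∧
    (¬ IsCenterOf n L a →
      2 * (extractWord n c L).count a = (stdWord n L).count a) :=
  statement_16_general n c x L hL a

end NCTL
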